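/- Let A be a real antisymmetric n×n matrix. Then the n-dimensional Mehler kernel converges to the Dirac mass at 0 as t → 0⁺: for every Schwartz function φ on ℝ^n, lim_{t→0⁺} ∫_{ℝ^n} G_A(x,t) φ(x) dx = φ(0). -/

import Mathlib

open Matrix MeasureTheory Topology Filter

open Matrix

/-- The matrix power series `Φ(M) = Σ_{k≥0} M^k/(2k+1)!` (i.e. `sinh(√z)/√z` evaluated on `M`). -/
noncomputable def matPhi {n : ℕ} (M : Matrix (Fin n) (Fin n) ℝ) : Matrix (Fin n) (Fin n) ℝ :=
  ∑' k : ℕ, (((2 * k + 1).factorial : ℝ))⁻¹ • M ^ k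

/-- The matrix power series `C(M) = Σ_{k≥0} M^k/(2k)!` (i.e. `cosh(√z)` evaluated on `M`). -/
noncomputable def matC {n : ℕ} (M : Matrix (Fin n) (Fin n) ℝ) : Matrix (Fin n) (Fin n) ℝ :=
  ∑' k : ℕ, (((2 * k).factorial : ℝ))⁻¹ • M ^ k

/-- `Ψ(M) = C(M) Φ(M)⁻¹`. -/
noncomputable def matPsi {n : ℕ} (M : Matrix (Fin n) (Fin n) ℝ) : Matrix (Fin n) (Fin n) ℝ :=
  matC M * (matPhi M)⁻¹

/-- The `n`-dimensional Mehler kernel attached to a real antisymmetric matrix `A` (with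
`B = −A²`): `G_A(x,t) = (4πt)^{−n/2} det(Φ(t²B))^{−1/2} exp(−(1/(4t)) ⟨Ψ(t²B)x, x⟩)`. -/
noncomputable def mehlerG {n : ℕ} (A : Matrix (Fin n) (Fin n) ℝ) (x : Fin n → ℝ) (t : ℝ) :
    ℝ :=
  (4 * Real.pi * t) ^ (-(n : ℝ) / 2) *
    ((matPhi (t ^ 2 • (-(A * A)))).det) ^ (-(1 : ℝ) / 2) *
    Real.exp (-(1 / (4 * t)) * (((matPsi (t ^ 2 • (-(A * A)))).mulVec x) ⬝ᵥ x))

/-!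
As `t → 0` we have `t²B → 0`, so the power series `Φ(t²B)` and `C(t²B)` tend to the identity, and
with them `Ψ(t²B)` and `det Φ(t²B)`. The substitution `x = √(4t) y` rewrites `∫ G_A(x,t) φ(x) dx` as
`π^{-n/2} det Φ(t²B)^{-1/2} ∫ exp(-⟨Ψ(t²B) y, y⟩) φ(√(4t) y) dy`. Once `Ψ(t²B)` is entrywise close
to the identity, the integrand is dominated by `sup |φ| · exp(-|y|²/2)`, and dominated convergence
gives the limit `π^{-n/2} · π^{n/2} φ(0)`.
-/

section PowerSeries

variable {R : Type*} [NormedRing R]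

-- `NormOneClass` would fail for `0 × 0` matrices.
lemma norm_pow_le_max_norm_one_mul (x : R) : ∀ k : ℕ, ‖x ^ k‖ ≤ max ‖(1 : R)‖ 1 * ‖x‖ ^ k
  | 0 => by simp
  | k + 1 => (norm_pow_le' x k.succ_pos).trans (le_mul_of_one_le_left (by positivity)
      (le_max_right _ _))

lemma tendsto_tsum_smul_pow_nhds_zero [NormedAlgebra ℝ R] [CompleteSpace R] {c : ℕ → ℝ}
    (hc : ∀ k, |c k| ≤ 1) :
    Tendsto (fun x : R => ∑' k, c k • x ^ k) (𝓝 0) (𝓝 (c 0 • 1)) := by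
  have hcont : ContinuousOn (fun x : R => ∑' k, c k • x ^ k) (Metric.closedBall 0 (1 / 2)) := by
    refine continuousOn_tsum (u := fun k => max ‖(1 : R)‖ 1 * (1 / 2) ^ k)
      (fun k => (continuous_const.smul (continuous_pow k)).continuousOn)
      ((summable_geometric_of_lt_one (by norm_num) (by norm_num)).mul_left _) fun k x hx => ?_
    rw [mem_closedBall_zero_iff] at hx
    calc ‖c k • x ^ k‖ ≤ |c k| * ‖x ^ k‖ := (norm_smul_le _ _).trans_eq (by rw [Real.norm_eq_abs])
      _ ≤ 1 * (max ‖(1 : R)‖ 1 * ‖x‖ ^ k) :=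
        mul_le_mul (hc k) (norm_pow_le_max_norm_one_mul x k) (norm_nonneg _) zero_le_one
      _ ≤ max ‖(1 : R)‖ 1 * (1 / 2) ^ k := by
        rw [one_mul]; gcongr
  have hzero : ∑' k, c k • (0 : R) ^ k = c 0 • 1 :=
    (tsum_eq_single 0 fun k hk => by simp [zero_pow hk]).trans (by simp)
  simpa [hzero] using (hcont.continuousAt (Metric.closedBall_mem_nhds 0 (by norm_num))).tendsto

end PowerSeries

section MatrixSeries

variable {ι : Type*} [Fintype ι] [DecidableEq ι]

-- Its topology is definitionally the product topology in which `matPhi` and `matC` are summed.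
attribute [local instance] Matrix.linftyOpNormedRing Matrix.linftyOpNormedAlgebra

lemma tendsto_tsum_smul_sq_smul_pow {c : ℕ → ℝ} (hc : ∀ k, |c k| ≤ 1) (hc0 : c 0 = 1)
    (B : Matrix ι ι ℝ) :
    Tendsto (fun t : ℝ => ∑' k, c k • (t ^ 2 • B) ^ k) (𝓝 0) (𝓝 1) := by
  have hB : Tendsto (fun t : ℝ => t ^ 2 • B) (𝓝 0) (𝓝 0) :=
    ((continuous_pow 2).smul continuous_const).tendsto' 0 0 (by simp)
  have h := (tendsto_tsum_smul_pow_nhds_zero hc).comp hB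
  rw [hc0, one_smul] at h
  exact h

end MatrixSeries

lemma abs_inv_factorial_le_one (m : ℕ) : |((m.factorial : ℝ))⁻¹| ≤ 1 := by
  rw [abs_inv, Nat.abs_cast]
  exact inv_le_one_of_one_le₀ (by exact_mod_cast m.factorial_pos)

section Limits

variable {n : ℕ} (B : Matrix (Fin n) (Fin n) ℝ)

lemma tendsto_matPhi : Tendsto (fun t : ℝ => matPhi (t ^ 2 • B)) (𝓝 0) (𝓝 1) :=
  tendsto_tsum_smul_sq_smul_pow (fun k => abs_inv_factorial_le_one (2 * k + 1)) (by simp) B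

lemma tendsto_matC : Tendsto (fun t : ℝ => matC (t ^ 2 • B)) (𝓝 0) (𝓝 1) :=
  tendsto_tsum_smul_sq_smul_pow (fun k => abs_inv_factorial_le_one (2 * k)) (by simp) B

lemma tendsto_det_matPhi : Tendsto (fun t : ℝ => (matPhi (t ^ 2 • B)).det) (𝓝 0) (𝓝 1) := by
  simpa [Function.comp_def] using (continuous_id.matrix_det.tendsto 1).comp (tendsto_matPhi B)

lemma tendsto_matPsi : Tendsto (fun t : ℝ => matPsi (t ^ 2 • B)) (𝓝 0) (𝓝 1) := by
  have hinv : ContinuousAt Inv.inv (1 : Matrix (Fin n) (Fin n) ℝ) :=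
    continuousAt_matrix_inv 1 (by rw [Ring.inverse_eq_inv']; exact continuousAt_inv₀ (by simp))
  simpa [matPsi, Function.comp_def] using
    (tendsto_matC B).mul (hinv.tendsto.comp (tendsto_matPhi B))

end Limits

section QuadraticForm

variable {ι : Type*} [Fintype ι]

lemma abs_mulVec_dotProduct_le {E : Matrix ι ι ℝ} {δ : ℝ} (hδ : 0 ≤ δ)
    (hE : ∀ i j, |E i j| ≤ δ) (y : ι → ℝ) :
    |E *ᵥ y ⬝ᵥ y| ≤ δ * Fintype.card ι * (y ⬝ᵥ y) :=
  calc |E *ᵥ y ⬝ᵥ y| = |∑ i, ∑ j, E i j * y j * y i| := by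
        simp only [dotProduct, mulVec, Finset.sum_mul]
    _ ≤ ∑ i, ∑ j, |E i j * y j * y i| :=
        (Finset.abs_sum_le_sum_abs _ _).trans
          (Finset.sum_le_sum fun i _ => Finset.abs_sum_le_sum_abs _ _)
    _ ≤ ∑ i, ∑ j, δ * |y j| * |y i| := by
        gcongr with i _ j _
        rw [abs_mul, abs_mul]
        gcongr
        exact hE i j
    _ = δ * (∑ i, |y i|) ^ 2 := by
        simp only [sq, Finset.mul_sum, Finset.sum_mul]
        rw [Finset.sum_comm]
        exact Finset.sum_congr rfl fun i _ => Finset.sum_congr rfl fun j _ => by ring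
    _ ≤ δ * (Fintype.card ι * ∑ i, |y i| ^ 2) := by
        gcongr
        exact sq_sum_le_card_mul_sum_sq
    _ = δ * Fintype.card ι * (y ⬝ᵥ y) := by
        simp only [← sq, sq_abs, dotProduct, mul_assoc]

lemma eventually_half_dotProduct_le_mulVec_dotProduct [DecidableEq ι] :
    ∀ᶠ P in 𝓝 (1 : Matrix ι ι ℝ), ∀ y : ι → ℝ, (1 / 2) * (y ⬝ᵥ y) ≤ P *ᵥ y ⬝ᵥ y := by
  set δ : ℝ := 1 / (2 * (Fintype.card ι + 1))
  have hδ : 0 < δ := by positivity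
  have hclose : ∀ᶠ P in 𝓝 (1 : Matrix ι ι ℝ), ∀ i j, |(P - 1) i j| ≤ δ := by
    refine eventually_all.2 fun i => eventually_all.2 fun j => ?_
    have hcont : Continuous fun P : Matrix ι ι ℝ => (P - 1) i j := by fun_prop
    simpa [Real.dist_eq] using (hcont.tendsto' 1 0 (by simp)).eventually
      (Metric.closedBall_mem_nhds 0 hδ)
  filter_upwards [hclose] with P hP y
  have hsplit : P *ᵥ y ⬝ᵥ y = y ⬝ᵥ y + (P - 1) *ᵥ y ⬝ᵥ y := by
    rw [sub_mulVec, one_mulVec, sub_dotProduct]; ring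
  have hsmall : δ * Fintype.card ι ≤ 1 / 2 := by
    rw [div_mul_eq_mul_div, one_mul, div_le_div_iff₀ (by positivity) (by norm_num)]; linarith
  have hyy : 0 ≤ y ⬝ᵥ y := dotProduct_self_star_nonneg y
  nlinarith [neg_abs_le ((P - 1) *ᵥ y ⬝ᵥ y), abs_mulVec_dotProduct_le hδ.le hP y,
    mul_le_mul_of_nonneg_right hsmall hyy]

lemma exp_neg_mul_dotProduct_self (b : ℝ) (y : ι → ℝ) :
    Real.exp (-b * (y ⬝ᵥ y)) = ∏ i, Real.exp (-b * y i ^ 2) := by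
  simp [← Real.exp_sum, dotProduct, Finset.mul_sum, sq]

lemma integrable_exp_neg_mul_dotProduct_self {b : ℝ} (hb : 0 < b) :
    Integrable fun y : ι → ℝ => Real.exp (-b * (y ⬝ᵥ y)) := by
  simp_rw [exp_neg_mul_dotProduct_self]
  exact Integrable.fintype_prod fun _ => integrable_exp_neg_mul_sq hb

lemma integral_exp_neg_dotProduct_self :
    ∫ y : ι → ℝ, Real.exp (-(y ⬝ᵥ y)) = Real.pi ^ ((Fintype.card ι : ℝ) / 2) := by
  calc ∫ y : ι → ℝ, Real.exp (-(y ⬝ᵥ y))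
      = ∫ y : ι → ℝ, ∏ i, Real.exp (-1 * y i ^ 2) := by
        simp_rw [← exp_neg_mul_dotProduct_self, neg_one_mul]
    _ = (∫ x : ℝ, Real.exp (-1 * x ^ 2)) ^ Fintype.card ι :=
        integral_fintype_prod_volume_eq_pow fun x : ℝ => Real.exp (-1 * x ^ 2)
    _ = Real.pi ^ ((Fintype.card ι : ℝ) / 2) := by
        rw [integral_gaussian, div_one, Real.sqrt_eq_rpow, ← Real.rpow_natCast,
          ← Real.rpow_mul Real.pi_pos.le]
        ring_nf

end QuadraticForm

lemma tendsto_integral_exp_neg_mulVec_dotProduct_mul {ι α : Type*} [Fintype ι] [DecidableEq ι]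
    {l : Filter α} [l.IsCountablyGenerated] {Q : α → Matrix ι ι ℝ} (hQ : Tendsto Q l (𝓝 1))
    {s : α → ℝ} (hs : Tendsto s l (𝓝 0)) {g : (ι → ℝ) → ℝ} (hg : Continuous g) {C : ℝ}
    (hC : ∀ x, ‖g x‖ ≤ C) :
    Tendsto (fun a => ∫ y, Real.exp (-(Q a *ᵥ y ⬝ᵥ y)) * g (s a • y)) l
      (𝓝 (Real.pi ^ ((Fintype.card ι : ℝ) / 2) * g 0)) := by
  rw [← integral_exp_neg_dotProduct_self, ← integral_mul_const]
  refine tendsto_integral_filter_of_dominated_convergence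
    (fun y => Real.exp (-(1 / 2) * (y ⬝ᵥ y)) * C) (Eventually.of_forall fun a => ?_) ?_
    ((integrable_exp_neg_mul_dotProduct_self (by norm_num)).mul_const C) (ae_of_all _ fun y => ?_)
  · exact (by fun_prop : Continuous fun y => Real.exp (-(Q a *ᵥ y ⬝ᵥ y)) * g (s a • y))
      |>.aestronglyMeasurable
  · filter_upwards [hQ.eventually eventually_half_dotProduct_le_mulVec_dotProduct] with a ha
    refine ae_of_all _ fun y => ?_
    rw [norm_mul, Real.norm_of_nonneg (Real.exp_pos _).le]
    exact mul_le_mul (Real.exp_le_exp.2 (by linarith [ha y])) (hC _) (norm_nonneg _)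
      (Real.exp_pos _).le
  · have hquad : Tendsto (fun a => Q a *ᵥ y ⬝ᵥ y) l (𝓝 (y ⬝ᵥ y)) := by
      simpa [Function.comp_def] using
        ((by fun_prop : Continuous fun P : Matrix ι ι ℝ => P *ᵥ y ⬝ᵥ y).tendsto 1).comp hQ
    have hscale : Tendsto (fun a => s a • y) l (𝓝 0) := by
      simpa using hs.smul_const y
    exact ((Real.continuous_exp.tendsto _).comp hquad.neg).mul ((hg.tendsto 0).comp hscale)

lemma integral_mehlerG_mul {n : ℕ} (A : Matrix (Fin n) (Fin n) ℝ) {t : ℝ} (ht : 0 < t)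
    (g : (Fin n → ℝ) → ℝ) :
    ∫ x, mehlerG A x t * g x = Real.pi ^ (-(n : ℝ) / 2) *
      ((matPhi (t ^ 2 • (-(A * A)))).det ^ (-(1 : ℝ) / 2) *
        ∫ y, Real.exp (-(matPsi (t ^ 2 • (-(A * A))) *ᵥ y ⬝ᵥ y)) * g (√(4 * t) • y)) := by
  set r := √(4 * t)
  have hr : 0 < r := Real.sqrt_pos.2 (by positivity)
  have hr2 : r ^ 2 = 4 * t := Real.sq_sqrt (by positivity)
  have hconst : r ^ n * (4 * Real.pi * t) ^ (-(n : ℝ) / 2) = Real.pi ^ (-(n : ℝ) / 2) := by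
    have hpow : (4 * Real.pi * t) ^ ((n : ℝ) / 2) = r ^ n * Real.pi ^ ((n : ℝ) / 2) := by
      rw [show 4 * Real.pi * t = r ^ 2 * Real.pi by rw [hr2]; ring,
        Real.mul_rpow (by positivity) Real.pi_pos.le, ← Real.rpow_natCast r 2,
        ← Real.rpow_mul hr.le, ← Real.rpow_natCast r n]
      ring_nf
    rw [neg_div, Real.rpow_neg (by positivity), Real.rpow_neg Real.pi_pos.le, hpow, mul_inv,
      ← mul_assoc, mul_inv_cancel₀ (by positivity), one_mul]
  have hrescale : ∀ y : Fin n → ℝ, mehlerG A (r • y) t * g (r • y) =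
      (4 * Real.pi * t) ^ (-(n : ℝ) / 2) * ((matPhi (t ^ 2 • (-(A * A)))).det ^ (-(1 : ℝ) / 2) *
        (Real.exp (-(matPsi (t ^ 2 • (-(A * A))) *ᵥ y ⬝ᵥ y)) * g (r • y))) := by
    intro y
    simp only [mehlerG, mulVec_smul, smul_dotProduct, dotProduct_smul, smul_eq_mul, ← mul_assoc,
      ← sq, hr2]
    field_simp
  calc ∫ x, mehlerG A x t * g x = r ^ n * ∫ y, mehlerG A (r • y) t * g (r • y) := by
        rw [Measure.integral_comp_smul volume (fun x => mehlerG A x t * g x) r,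
          Module.finrank_fin_fun, abs_of_pos (by positivity), smul_eq_mul, ← mul_assoc,
          mul_inv_cancel₀ (by positivity), one_mul]
    _ = _ := by
        simp_rw [hrescale, integral_const_mul]
        rw [← mul_assoc, hconst]

theorem stmt_11_general (n : ℕ) (A : Matrix (Fin n) (Fin n) ℝ)
    (φ : SchwartzMap (Fin n → ℝ) ℝ) :
    Tendsto (fun t : ℝ => ∫ x : Fin n → ℝ, mehlerG A x t * φ x) (𝓝[>] 0) (𝓝 (φ 0)) := by
  set B := -(A * A)
  have hdet : Tendsto (fun t : ℝ => (matPhi (t ^ 2 • B)).det ^ (-(1 : ℝ) / 2)) (𝓝[>] 0) (𝓝 1) := by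
    simpa using ((tendsto_det_matPhi B).rpow_const (.inl one_ne_zero)).mono_left
      nhdsWithin_le_nhds
  have hscale : Tendsto (fun t : ℝ => √(4 * t)) (𝓝[>] 0) (𝓝 0) := by
    simpa using ((by fun_prop : Continuous fun t : ℝ => √(4 * t)).tendsto 0).mono_left
      nhdsWithin_le_nhds
  have hgauss := tendsto_integral_exp_neg_mulVec_dotProduct_mul
    ((tendsto_matPsi B).mono_left nhdsWithin_le_nhds) hscale φ.continuous
    (SchwartzMap.norm_le_seminorm ℝ φ)
  have hlim := tendsto_const_nhds (x := Real.pi ^ (-(n : ℝ) / 2)).mul (hdet.mul hgauss)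
  have hval : Real.pi ^ (-(n : ℝ) / 2) * (1 * (Real.pi ^ ((n : ℝ) / 2) * φ 0)) = φ 0 := by
    rw [one_mul, ← mul_assoc, ← Real.rpow_add Real.pi_pos, neg_div, neg_add_cancel,
      Real.rpow_zero, one_mul]
  rw [Fintype.card_fin, hval] at hlim
  exact hlim.congr' (eventually_nhdsWithin_of_forall fun t ht => (integral_mehlerG_mul A ht φ).symm)

/-- For a real antisymmetric matrix `A`, the `n`-dimensional Mehler kernel
converges to the Dirac mass at `0` as `t → 0⁺`: for every Schwartz function `φ` on `ℝⁿ`,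
`∫ G_A(x,t) φ(x) dx → φ(0)`. -/
theorem stmt_11 (n : ℕ) (A : Matrix (Fin n) (Fin n) ℝ) (hA : Aᵀ = -A)
    (φ : SchwartzMap (Fin n → ℝ) ℝ) :
    Tendsto (fun t : ℝ => ∫ x : Fin n → ℝ, mehlerG A x t * φ x) (𝓝[>] 0) (𝓝 (φ 0)) :=
  stmt_11_general n A φ
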